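/- Let l be a positive integer, n a nonzero integer, 0 ≤ j ≤ |n|−1, 0 ≤ u ≤ l−1, and let g : ℝ → ℂ be a Schwartz function. Then for every γ ∈ N_l = ℤ × lℤ × ℤ and every (p,q,s) ∈ ℝ³, (W_n^{j,u}g)(γ ⋆ (p,q,s)) = (W_n^{j,u}g)(p,q,s); that is, the Weil–Brezin transform of g is invariant under left translation by the lattice N_l. -/
import Mathlib


noncomputable section

abbrev H3 := ℝ × ℝ × ℝ

/-- polarized Heisenberg multiplication -/
def Hmul (a b : H3) : H3 := (a.1 + b.1, a.2.1 + b.2.1, a.2.2 + b.2.2 + a.1 * b.2.1)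

/-- the lattice N_l = ℤ × lℤ × ℤ -/
def Nl (l : ℕ) : Set H3 :=
  {x | ∃ a b c : ℤ, x = ((a : ℝ), (l : ℝ) * (b : ℝ), (c : ℝ))}

/-- Weil–Brezin transform associated to the lattice N_l -/
def WB (l : ℕ) (n j u : ℤ) (g : ℝ → ℂ) : H3 → ℂ := fun x =>
  Complex.exp (2 * Real.pi * Complex.I * (n : ℂ) * (x.2.2 : ℂ)) *
    ∑' k : ℤ,
      g (x.1 + (k : ℝ) + (j : ℝ) / |(n : ℝ)| + (u : ℝ) / ((l : ℝ) * (n : ℝ))) *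
        Complex.exp (2 * Real.pi * Complex.I * (n : ℂ) *
          ((((k : ℝ) + (j : ℝ) / |(n : ℝ)| + (u : ℝ) / ((l : ℝ) * (n : ℝ))) : ℝ) : ℂ) *
          (x.2.1 : ℂ))

private lemma exp_aux (m : ℤ) (x y : ℂ) (h : x = y + m * (2 * Real.pi * Complex.I)) :
    Complex.exp x = Complex.exp y := by
  rw [h, Complex.exp_add, Complex.exp_int_mul_two_pi_mul_I, mul_one]

/-- the Weil–Brezin transform of a Schwartz function is invariant under
left translation by the lattice N_l. -/
theorem WB_left_invariant (l : ℕ) (hl : 0 < l) (n : ℤ) (hn : n ≠ 0) (j u : ℤ)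
    (hj0 : 0 ≤ j) (hj1 : j ≤ |n| - 1) (hu0 : 0 ≤ u) (hu1 : u ≤ (l : ℤ) - 1)
    (g : SchwartzMap ℝ ℂ) :
    ∀ γ ∈ Nl l, ∀ x : H3, WB l n j u g (Hmul γ x) = WB l n j u g x := by
  rintro γ ⟨a, b, c, rfl⟩ ⟨p, q, s⟩
  have hnR : (n : ℝ) ≠ 0 := Int.cast_ne_zero.mpr hn
  have hlR : (l : ℝ) ≠ 0 := Nat.cast_ne_zero.mpr hl.ne'
  have hsR : ((n.sign : ℤ) : ℝ) ≠ 0 :=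
    Int.cast_ne_zero.mpr fun h => hn (Int.sign_eq_zero_iff_zero.mp h)
  have hsign : ((n.sign : ℤ) : ℝ) * |(n : ℝ)| = (n : ℝ) := by
    rw [← Int.cast_abs, ← Int.cast_mul, Int.sign_mul_abs]
  have habs : |(n : ℝ)| ≠ 0 := abs_ne_zero.mpr hnR
  have hd : (j : ℝ) / |(n : ℝ)| = (j : ℝ) * ((n.sign : ℤ) : ℝ) / (n : ℝ) := by
    rw [div_eq_div_iff habs hnR]
    linear_combination (-(j : ℝ)) * hsign
  simp only [WB, Hmul]
  rw [hd, ← tsum_mul_left, ← tsum_mul_left, ← (Equiv.subRight (a : ℤ)).tsum_eq]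
  refine tsum_congr fun k => ?_
  simp only [Equiv.subRight_apply, Int.cast_sub]
  have harg : (a : ℝ) + p + ((k : ℝ) - (a : ℝ)) + (j : ℝ) * ((n.sign : ℤ) : ℝ) / (n : ℝ) +
        (u : ℝ) / ((l : ℝ) * (n : ℝ))
      = p + (k : ℝ) + (j : ℝ) * ((n.sign : ℤ) : ℝ) / (n : ℝ) + (u : ℝ) / ((l : ℝ) * (n : ℝ)) := by
    ring
  rw [harg]
  set G := g (p + (k : ℝ) + (j : ℝ) * ((n.sign : ℤ) : ℝ) / (n : ℝ) +
    (u : ℝ) / ((l : ℝ) * (n : ℝ))) with hG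
  rw [mul_comm G, ← mul_assoc, ← Complex.exp_add, mul_comm G, ← mul_assoc, ← Complex.exp_add]
  congr 1
  apply exp_aux (n * c + n * k * (l : ℤ) * b - n * a * (l : ℤ) * b + j * n.sign * (l : ℤ) * b + u * b)
  have hnC : (n : ℂ) ≠ 0 := Int.cast_ne_zero.mpr hn
  have hlC : (l : ℂ) ≠ 0 := Nat.cast_ne_zero.mpr hl.ne'
  push_cast
  field_simp
  ring

end
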